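/- arXiv:2510.17262 — 5 statements merged into one kernel-verified Lean document; each statement's English description precedes it below -/
import Mathlib

section
/- For every unweighted undirected simple graph G on n ≥ 2 vertices, there exists a 4-additive spanner H of G containing at most C · n^{7/5} · (log n)^{3/5} edges, where C is an absolute constant independent of G and n. -/
/-- `H` is a `k`-additive spanner of `G`: a spanning subgraph preserving all
pairwise (extended) distances up to additive error `k`. -/
def IsAdditiveSpanner {V : Type*} (G H : SimpleGraph V) (k : ℕ) : Prop :=
  H ≤ G ∧ ∀ u v : V, H.edist u v ≤ G.edist u v + k

/-!
Call a vertex heavy if its degree is at least `d`. Keep every edge at a light vertex; a greedy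
hitting set `R₁` of `O((n / d) log n)` centres meets every heavy neighbourhood, and each heavy
vertex is joined to a centre. This costs `O(n d)` edges, and both endpoints of an edge that is not
kept are heavy, hence adjacent in the kept graph to a centre.

Take a shortest `u`–`v` path. If at most `z` of its edges are not kept, follow it up to its first
such edge, hop through a centre into that centre's cluster, take a shortest walk between the two
clusters with at most `z` edges not kept (those edges are bought once for each pair of centres,
`z |R₁|²` edges in all), hop through the last centre and follow the path from its last edge not
kept: additive error `4`. Otherwise the path has at least `z` heavy vertices; a vertex is adjacent
to at most three vertices of a shortest path, so their neighbourhoods cover at least `z d / 3`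
vertices. A hitting set `R₂` of `O((n / (z d)) log n)` vertices meets these neighbourhoods for
all `n²` pairs, and a shortest-path tree from each vertex of `R₂` gives additive error `2`.

Writing `n = L t⁵` with `L = log n`, the choice `d ≈ L t²`, `z ≈ t` makes each of the four parts
`O(L² t⁷) = O(n^{7/5} log^{3/5} n)`.
-/

open Finset

section HittingSet

variable {ι V : Type*} [Fintype V] [DecidableEq V] (s : ι → Finset V) {D : ℝ}

theorem exists_mem_card_filter_notMem_le (hD : 0 < D) {I : Finset ι} (hI : I.Nonempty)
    (hs : ∀ i ∈ I, D ≤ #(s i)) :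
    ∃ x, (#(I.filter (x ∉ s ·)) : ℝ) ≤ #I * (1 - D / Fintype.card V) := by
  obtain ⟨i₀, hi₀⟩ := hI
  obtain ⟨x₀, -⟩ : (s i₀).Nonempty := card_pos.mp (by exact_mod_cast hD.trans_le (hs i₀ hi₀))
  have hn : (0 : ℝ) < Fintype.card V := by exact_mod_cast Fintype.card_pos_iff.mpr ⟨x₀⟩
  have hcount : (#I * D : ℝ) ≤ ∑ x, (#(I.filter (x ∈ s ·)) : ℝ) := by
    have := sum_card_bipartiteAbove_eq_sum_card_bipartiteBelow (s := I) (t := univ)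
      (r := fun i x => x ∈ s i)
    simp only [bipartiteAbove, bipartiteBelow, filter_mem_eq_inter, univ_inter] at this
    rw [← Nat.cast_sum, ← this, Nat.cast_sum]
    simpa [nsmul_eq_mul] using card_nsmul_le_sum I (fun i => (#(s i) : ℝ)) D hs
  obtain ⟨x, -, hx⟩ := exists_le_of_sum_le (s := univ) ⟨x₀, mem_univ _⟩
    (f := fun _ => (#I * D / Fintype.card V : ℝ)) (g := fun x => (#(I.filter (x ∈ s ·)) : ℝ))
    (by simpa [mul_div_cancel₀ _ hn.ne'] using hcount)
  refine ⟨x, ?_⟩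
  have := card_filter_add_card_filter_not (s := I) (x ∈ s ·)
  rw [mul_one_sub, ← mul_div_assoc]
  linarith [show (#(I.filter (x ∈ s ·)) : ℝ) + #(I.filter (x ∉ s ·)) = #I by exact_mod_cast this]

theorem exists_hitting_set_card_le_of_lt (hD : 0 < D) (k : ℕ) (I : Finset ι)
    (hs : ∀ i ∈ I, D ≤ #(s i)) (hk : #I * (1 - D / Fintype.card V) ^ k < 1) :
    ∃ R : Finset V, #R ≤ k ∧ ∀ i ∈ I, ∃ x ∈ R, x ∈ s i := by
  induction k generalizing I with
  | zero =>
    have : I = ∅ := card_eq_zero.mp (Nat.lt_one_iff.mp (by exact_mod_cast (by simpa using hk)))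
    exact ⟨∅, by simp, by simp [this]⟩
  | succ k ih =>
    rcases I.eq_empty_or_nonempty with rfl | hI
    · exact ⟨∅, by simp, by simp⟩
    obtain ⟨x, hx⟩ := exists_mem_card_filter_notMem_le s hD hI hs
    obtain ⟨i₀, hi₀⟩ := hI
    have hDn : D / Fintype.card V ≤ 1 :=
      div_le_one_of_le₀ ((hs i₀ hi₀).trans (by exact_mod_cast card_le_univ _)) (by positivity)
    obtain ⟨R, hRk, hR⟩ := ih (I.filter (x ∉ s ·)) (fun i hi => hs i (mem_filter.mp hi).1) <| by
      calc (#(I.filter (x ∉ s ·)) : ℝ) * (1 - D / Fintype.card V) ^ k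
          ≤ #I * (1 - D / Fintype.card V) * (1 - D / Fintype.card V) ^ k := by
            gcongr
        _ < 1 := by rwa [mul_assoc, ← pow_succ']
    refine ⟨insert x R, (card_insert_le _ _).trans (by omega), fun i hi => ?_⟩
    by_cases hxi : x ∈ s i
    · exact ⟨x, mem_insert_self _ _, hxi⟩
    · obtain ⟨y, hyR, hyi⟩ := hR i (mem_filter.mpr ⟨hi, hxi⟩)
      exact ⟨y, mem_insert_of_mem hyR, hyi⟩

theorem exists_hitting_set (hD : 0 < D) (I : Finset ι) (hs : ∀ i ∈ I, D ≤ #(s i)) :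
    ∃ R : Finset V, (∀ i ∈ I, ∃ x ∈ R, x ∈ s i) ∧
      (#R : ℝ) ≤ Fintype.card V / D * (1 + Real.log #I) := by
  rcases I.eq_empty_or_nonempty with rfl | ⟨i₀, hi₀⟩
  · exact ⟨∅, by simp, by simp; positivity⟩
  set n : ℝ := (Fintype.card V : ℝ)
  have hDn : D ≤ n := (hs i₀ hi₀).trans (Nat.cast_le.mpr (card_le_univ _))
  have hn : 0 < n := hD.trans_le hDn
  have hI : (1 : ℝ) ≤ #I := Nat.one_le_cast.mpr (card_pos.mpr ⟨i₀, hi₀⟩)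
  set y := n / D * Real.log #I
  have hy : 0 ≤ y := mul_nonneg (by positivity) (Real.log_nonneg hI)
  -- `(1 - D / n) ^ k ≤ exp (-k D / n) < 1 / #I` as soon as `k > y`
  obtain ⟨R, hRk, hR⟩ := exists_hitting_set_card_le_of_lt s hD (⌊y⌋₊ + 1) I hs <| by
    have hlog : Real.log #I < (⌊y⌋₊ + 1 : ℕ) * (D / n) := by
      have := Nat.lt_floor_add_one y
      push_cast
      calc Real.log #I = y * (D / n) := by simp only [y]; field_simp
        _ < _ := by gcongr
    calc (#I : ℝ) * (1 - D / n) ^ (⌊y⌋₊ + 1)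
        ≤ Real.exp (Real.log #I) * Real.exp (-(D / n)) ^ (⌊y⌋₊ + 1) := by
          rw [Real.exp_log (by linarith)]
          gcongr
          · exact sub_nonneg.mpr (div_le_one_of_le₀ hDn (by positivity))
          · linarith [Real.add_one_le_exp (-(D / n))]
      _ < 1 := by
          rw [← Real.exp_nat_mul, ← Real.exp_add, Real.exp_lt_one_iff]
          linarith
  refine ⟨R, hR, ?_⟩
  calc (#R : ℝ) ≤ y + 1 := by
        have := Nat.floor_le hy
        exact_mod_cast (Nat.cast_le.mpr hRk).trans (by push_cast; linarith)
    _ ≤ n / D * (1 + Real.log #I) := by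
        rw [mul_one_add]
        linarith [(one_le_div₀ hD).mpr hDn]

end HittingSet

theorem Real.log_natCast_le_log_natCast {m n : ℕ} (h : m ≤ n) : Real.log m ≤ Real.log n := by
  rcases m.eq_zero_or_pos with rfl | hm
  · simpa using Real.log_natCast_nonneg n
  · exact Real.log_le_log (by exact_mod_cast hm) (by exact_mod_cast h)

namespace SimpleGraph

variable {V : Type*} {G H : SimpleGraph V} {u v : V}

theorem edist_le_length_of_forall_mem_edgeSet (p : G.Walk u v)
    (hp : ∀ e ∈ p.edges, e ∈ H.edgeSet) : H.edist u v ≤ p.length := by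
  simpa using (p.transfer H hp).edist_le

theorem ncard_edgeSet_fromEdgeSet_le (s : Finset (Sym2 V)) :
    (fromEdgeSet (s : Set (Sym2 V))).edgeSet.ncard ≤ #s := by
  rw [← Set.ncard_coe_finset]
  exact Set.ncard_le_ncard (by simp [edgeSet_fromEdgeSet])

theorem Reachable.exists_adj_dist_lt {w t : V} (ht : G.Reachable w t) (hne : t ≠ w) :
    ∃ s, G.Adj s t ∧ G.dist w s < G.dist w t := by
  obtain ⟨q, hq⟩ := ht.exists_walk_length_eq_dist
  have hq₀ : ¬q.Nil := fun h => hne h.eq.symm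
  refine ⟨q.penultimate, q.adj_penultimate hq₀, ?_⟩
  have := congrArg Walk.length (q.concat_dropLast (q.adj_penultimate hq₀))
  rw [Walk.length_concat] at this
  have := dist_le q.dropLast
  omega

theorem exists_shortestPathTree [Fintype V] [DecidableEq V] (G : SimpleGraph V) (w : V) :
    ∃ T : Finset (Sym2 V), ↑T ⊆ G.edgeSet ∧ #T ≤ Fintype.card V ∧
      ∀ t, (fromEdgeSet ↑T).edist w t ≤ G.edist w t := by
  classical
  choose! parent hparent using fun t (h : ∃ s, G.Adj s t ∧ G.dist w s < G.dist w t) => h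
  set T := (univ.filter fun t => ∃ s, G.Adj s t ∧ G.dist w s < G.dist w t).image
    fun t => s(parent t, t)
  refine ⟨T, ?_, card_image_le.trans (card_filter_le _ _), fun t => ?_⟩
  · intro e he
    obtain ⟨t, ht, rfl⟩ := mem_image.mp he
    exact (hparent t (mem_filter.mp ht).2).1
  by_cases ht : G.Reachable w t
  swap
  · simp [edist_eq_top_of_not_reachable ht]
  rw [← ht.coe_dist_eq_edist]
  induction hk : G.dist w t using Nat.strong_induction_on generalizing t with
  | _ k ih =>
    by_cases hne : t = w
    · simp [hne]
    have hex := ht.exists_adj_dist_lt hne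
    obtain ⟨hadj, hlt⟩ := hparent t hex
    have hT : (fromEdgeSet ↑T).Adj (parent t) t :=
      (fromEdgeSet_adj _).mpr ⟨mem_image.mpr ⟨t, by simpa using hex, rfl⟩, hadj.ne⟩
    calc (fromEdgeSet ↑T).edist w t
        ≤ (fromEdgeSet ↑T).edist w (parent t) + (fromEdgeSet ↑T).edist (parent t) t :=
          SimpleGraph.edist_triangle
      _ ≤ (G.dist w (parent t) : ℕ∞) + 1 := by
          gcongr
          · exact ih _ (hk ▸ hlt) _ (ht.trans hadj.reachable.symm) rfl
          · exact (edist_eq_one_iff_adj.mpr hT).le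
      _ ≤ k := by norm_cast; omega

namespace Walk

theorem exists_eq_append_cons_of_notMem {S : Set (Sym2 V)} (p : G.Walk u v)
    (h : ∃ e ∈ p.edges, e ∉ S) :
    ∃ (a b : V) (hab : G.Adj a b) (p₁ : G.Walk u a) (p₂ : G.Walk b v),
      p = p₁.append (cons hab p₂) ∧ (∀ e ∈ p₁.edges, e ∈ S) ∧ s(a, b) ∉ S := by
  induction p with
  | nil => simp at h
  | @cons u w v huw q ih =>
    by_cases hS : s(u, w) ∈ S
    · obtain ⟨a, b, hab, p₁, p₂, rfl, hp₁, habS⟩ := ih <| by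
        obtain ⟨e, he, heS⟩ := h
        exact ⟨e, (List.mem_cons.mp he).resolve_left (by rintro rfl; exact heS hS), heS⟩
      refine ⟨a, b, hab, cons huw p₁, p₂, rfl, ?_, habS⟩
      simp only [edges_cons, List.mem_cons, forall_eq_or_imp]
      exact ⟨hS, hp₁⟩
    · exact ⟨u, w, huw, nil, q, rfl, by simp, hS⟩

theorem exists_eq_append_append_of_notMem {S : Set (Sym2 V)} (p : G.Walk u v)
    (h : ∃ e ∈ p.edges, e ∉ S) :
    ∃ (a b y x : V) (p₁ : G.Walk u a) (q : G.Walk a y) (p₂ : G.Walk y v),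
      p = p₁.append (q.append p₂) ∧ (∀ e ∈ p₁.edges, e ∈ S) ∧ (∀ e ∈ p₂.edges, e ∈ S) ∧
      G.Adj a b ∧ s(a, b) ∉ S ∧ G.Adj y x ∧ s(y, x) ∉ S := by
  obtain ⟨a, b, hab, p₁, r, rfl, hp₁, habS⟩ := p.exists_eq_append_cons_of_notMem h
  obtain ⟨y, x, hyx, r₁, r₂, hr, hr₁, hyxS⟩ := (cons hab r).reverse.exists_eq_append_cons_of_notMem
    ⟨s(a, b), by simp, habS⟩
  refine ⟨a, b, y, x, p₁, (cons hyx r₂).reverse, r₁.reverse, ?_, hp₁, by simpa using hr₁,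
    hab, habS, hyx, hyxS⟩
  rw [← reverse_append, ← hr, reverse_reverse]

open Classical in
noncomputable def numEdgesOutside (H : SimpleGraph V) (p : G.Walk u v) : ℕ :=
  p.edges.countP (· ∉ H.edgeSet)

-- On a path, distinct darts leave from distinct vertices.
theorem IsPath.numEdgesOutside_le [DecidableEq V] {p : G.Walk u v} (hp : p.IsPath)
    {Q : V → Prop} [DecidablePred Q] (hQ : ∀ x y, G.Adj x y → ¬H.Adj x y → Q x) :
    p.numEdgesOutside H ≤ #(p.support.toFinset.filter Q) := by
  classical
  set L := (p.darts.filter (fun d => d.edge ∉ H.edgeSet)).map (·.fst)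
  have hL : L.Sublist p.support.dropLast := p.map_fst_darts ▸ List.filter_sublist.map _
  have hcount : p.numEdgesOutside H = L.length := by
    rw [numEdgesOutside, edges, List.countP_map, List.countP_eq_length_filter, List.length_map]
    congr
  rw [hcount, ← List.toFinset_card_of_nodup (hL.nodup (hp.support_nodup.sublist
    (List.dropLast_sublist _)))]
  refine card_le_card fun x hx => ?_
  simp only [L, List.mem_toFinset, List.mem_map, List.mem_filter] at hx
  obtain ⟨d, ⟨hd, hdH⟩, rfl⟩ := hx
  simp only [mem_filter, List.mem_toFinset]
  exact ⟨p.dart_fst_mem_support_of_mem_darts hd,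
    hQ _ _ d.adj fun h => of_decide_eq_true hdH (H.mem_edgeSet.mpr h)⟩

theorem getVert_dist_of_length_eq_dist {p : G.Walk u v} (hp : p.length = G.dist u v) {x : V}
    (hx : x ∈ p.support) : p.getVert (G.dist u x) = x := by
  classical
  rw [← length_eq_dist_of_subwalk hp (p.isSubwalk_takeUntil hx), getVert_length_takeUntil]

theorem card_filter_adj_support_le_three [DecidableEq V] [DecidableRel G.Adj] {p : G.Walk u v}
    (hp : p.length = G.dist u v) (w : V) : #(p.support.toFinset.filter (G.Adj w)) ≤ 3 := by
  set A := p.support.toFinset.filter (G.Adj w)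
  have hA : ∀ x ∈ A, x ∈ p.support ∧ G.Adj w x := by simp [A]
  rcases A.eq_empty_or_nonempty with hAe | hAne
  · simp [hAe]
  have hinj : Set.InjOn (G.dist u) A := fun x hx y hy hxy => by
    rw [← p.getVert_dist_of_length_eq_dist hp (hA x hx).1, hxy,
      p.getVert_dist_of_length_eq_dist hp (hA y hy).1]
  have hclose : ∀ x ∈ A, ∀ y ∈ A, G.dist u y ≤ G.dist u x + 2 := fun x hx y hy =>
    ((p.takeUntil x (hA x hx).1).reachable.dist_triangle_left y).trans
      (by gcongr; exact dist_le ((cons (hA x hx).2.symm (cons (hA y hy).2 nil))))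
  obtain ⟨x₀, hx₀, hmin⟩ := A.exists_min_image (G.dist u) hAne
  calc #A = #(A.image (G.dist u)) := (card_image_of_injOn hinj).symm
    _ ≤ #(Icc (G.dist u x₀) (G.dist u x₀ + 2)) := card_le_card fun k hk => by
        obtain ⟨y, hy, rfl⟩ := mem_image.mp hk
        exact mem_Icc.mpr ⟨hmin y hy, hclose x₀ hx₀ y hy⟩
    _ = 3 := by rw [Nat.card_Icc]; omega

theorem card_mul_le_card_biUnion_neighborFinset [Fintype V] [DecidableEq V] [DecidableRel G.Adj]
    {p : G.Walk u v} (hp : p.length = G.dist u v) {T : Finset V}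
    (hT : T ⊆ p.support.toFinset) {d : ℕ} (hd : ∀ x ∈ T, d ≤ G.degree x) :
    #T * d ≤ #(T.biUnion fun x => G.neighborFinset x) * 3 := by
  refine card_mul_le_card_mul (fun x w => G.Adj x w) (fun x hx => ?_) (fun w _ => ?_)
  · refine (card_neighborFinset_eq_degree G x ▸ hd x hx).trans (card_le_card fun y hy => ?_)
    rw [mem_neighborFinset] at hy
    exact (mem_bipartiteAbove _).mpr ⟨mem_biUnion.mpr ⟨x, hx, by simpa using hy⟩, hy⟩
  · refine le_trans (card_le_card fun x hx => ?_) (card_filter_adj_support_le_three hp w)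
    rw [mem_bipartiteBelow] at hx
    exact mem_filter.mpr ⟨hT hx.1, hx.2.symm⟩

end Walk

theorem exists_shortcut [DecidableEq V] (H₀ : SimpleGraph V) (X Y : Set V) (z : ℕ) :
    ∃ B : Finset (Sym2 V), #B ≤ z ∧ ↑B ⊆ G.edgeSet ∧
      ∀ a ∈ X, ∀ b ∈ Y, ∀ p : G.Walk a b, p.numEdgesOutside H₀ ≤ z →
        ∃ a' ∈ X, ∃ b' ∈ Y, (H₀ ⊔ fromEdgeSet ↑B).edist a' b' ≤ p.length := by
  classical
  by_cases h : ∃ q : Σ a b, G.Walk a b, q.1 ∈ X ∧ q.2.1 ∈ Y ∧ q.2.2.numEdgesOutside H₀ ≤ z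
  swap
  · exact ⟨∅, by simp, by simp, fun a ha b hb p hp => absurd ⟨⟨a, b, p⟩, ha, hb, hp⟩ h⟩
  -- buy the missing edges of a shortest admissible walk
  obtain ⟨⟨a, b, q⟩, ⟨ha, hb, hq⟩, hmin⟩ :=
    exists_minimalFor_of_wellFoundedLT _ (fun q : Σ a b, G.Walk a b => q.2.2.length) h
  refine ⟨(q.edges.filter (· ∉ H₀.edgeSet)).toFinset, ?_, ?_, ?_⟩
  · refine (List.toFinset_card_le _).trans (le_of_eq_of_le ?_ hq)
    rw [Walk.numEdgesOutside, List.countP_eq_length_filter]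
  · intro e he
    exact q.edges_subset_edgeSet (List.mem_of_mem_filter (List.mem_toFinset.mp he))
  · intro a' ha' b' hb' p hp
    refine ⟨a, ha, b, hb, (edist_le_length_of_forall_mem_edgeSet q fun e he => ?_).trans ?_⟩
    · rw [edgeSet_sup, edgeSet_fromEdgeSet]
      by_cases heH : e ∈ H₀.edgeSet
      · exact Or.inl heH
      · exact Or.inr ⟨by simpa using ⟨he, heH⟩, G.not_isDiag_of_mem_edgeSet
          (q.edges_subset_edgeSet he)⟩
    · exact_mod_cast (le_total q.length p.length).elim id
        (hmin (j := ⟨a', b', p⟩) ⟨ha', hb', hp⟩)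

theorem edist_le_length_add_two {w x : V} (hw : ∀ t, H.edist w t ≤ G.edist w t)
    (hwx : G.Adj w x) (p : G.Walk u v) (hx : x ∈ p.support) : H.edist u v ≤ p.length + 2 := by
  classical
  have hsplit := congrArg Walk.length (p.take_spec hx)
  rw [Walk.length_append] at hsplit
  calc H.edist u v ≤ H.edist u w + H.edist w v := SimpleGraph.edist_triangle
    _ = H.edist w u + H.edist w v := by rw [edist_comm]
    _ ≤ G.edist w u + G.edist w v := add_le_add (hw u) (hw v)
    _ ≤ (Walk.cons hwx (p.takeUntil x hx).reverse).length +
          (Walk.cons hwx (p.dropUntil x hx)).length := add_le_add (edist_le _) (edist_le _)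
    _ = p.length + 2 := by
        rw [← hsplit]; simp only [Walk.length_cons, Walk.length_reverse]; push_cast; ring

theorem edist_le_length_add_four {H₀ : SimpleGraph V} (hH₀ : H₀ ≤ H) {R : Set V} {z : ℕ}
    (hcl : ∀ x y, G.Adj x y → ¬H₀.Adj x y → ∃ c ∈ R, H₀.Adj c x)
    (hsc : ∀ c₁ ∈ R, ∀ c₂ ∈ R, ∀ a ∈ H₀.neighborSet c₁, ∀ b ∈ H₀.neighborSet c₂,
      ∀ q : G.Walk a b, q.numEdgesOutside H₀ ≤ z →
        ∃ a' ∈ H₀.neighborSet c₁, ∃ b' ∈ H₀.neighborSet c₂, H.edist a' b' ≤ q.length)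
    (p : G.Walk u v) (hp : p.numEdgesOutside H₀ ≤ z) : H.edist u v ≤ p.length + 4 := by
  have hH : H₀.edgeSet ⊆ H.edgeSet := edgeSet_mono hH₀
  by_cases h : ∀ e ∈ p.edges, e ∈ H₀.edgeSet
  · exact (edist_le_length_of_forall_mem_edgeSet p fun e he => hH (h e he)).trans le_self_add
  obtain ⟨a, b, y, x, p₁, q, p₂, rfl, hp₁, hp₂, hab, habH, hyx, hyxH⟩ :=
    p.exists_eq_append_append_of_notMem (by simpa using h)
  obtain ⟨c₁, hc₁, hac₁⟩ := hcl a b hab habH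
  obtain ⟨c₂, hc₂, hyc₂⟩ := hcl y x hyx hyxH
  obtain ⟨a', ha', b', hb', hq⟩ := hsc c₁ hc₁ c₂ hc₂ a hac₁ y hyc₂ q <| hp.trans' <| by
    simp only [Walk.numEdgesOutside, Walk.edges_append, List.countP_append]
    omega
  have hstar : ∀ {c x x'}, H₀.Adj c x → H₀.Adj c x' → H.edist x x' ≤ 2 := fun hx hx' => by
    calc H.edist _ _ ≤ H.edist _ _ + H.edist _ _ := SimpleGraph.edist_triangle
      _ = 1 + 1 := by
          rw [edist_comm, edist_eq_one_iff_adj.mpr (hH₀ hx), edist_eq_one_iff_adj.mpr (hH₀ hx')]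
      _ = 2 := by norm_num
  have hay : H.edist a y ≤ H.edist a a' + H.edist a' b' + H.edist b' y :=
    SimpleGraph.edist_triangle.trans (add_le_add_left SimpleGraph.edist_triangle _)
  calc H.edist u v ≤ H.edist u a + H.edist a y + H.edist y v :=
        SimpleGraph.edist_triangle.trans (add_le_add_left SimpleGraph.edist_triangle _)
    _ ≤ H.edist u a + (H.edist a a' + H.edist a' b' + H.edist b' y) + H.edist y v := by gcongr
    _ ≤ p₁.length + (2 + q.length + 2) + p₂.length := by
        gcongr
        · exact edist_le_length_of_forall_mem_edgeSet p₁ fun e he => hH (hp₁ e he)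
        · exact hstar hac₁ ha'
        · exact hstar hb' hyc₂
        · exact edist_le_length_of_forall_mem_edgeSet p₂ fun e he => hH (hp₂ e he)
    _ = (p₁.append (q.append p₂)).length + 4 := by
        simp only [Walk.length_append]; push_cast; ring

theorem edist_le_edist_add_four {H₀ : SimpleGraph V} (hH₀ : H₀ ≤ H) {R₁ R₂ : Set V} {z : ℕ}
    (hcl : ∀ x y, G.Adj x y → ¬H₀.Adj x y → ∃ c ∈ R₁, H₀.Adj c x)
    (hsc : ∀ c₁ ∈ R₁, ∀ c₂ ∈ R₁, ∀ a ∈ H₀.neighborSet c₁, ∀ b ∈ H₀.neighborSet c₂,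
      ∀ q : G.Walk a b, q.numEdgesOutside H₀ ≤ z →
        ∃ a' ∈ H₀.neighborSet c₁, ∃ b' ∈ H₀.neighborSet c₂, H.edist a' b' ≤ q.length)
    (hgeo : ∀ u v, G.Reachable u v → ∃ p : G.Walk u v, p.length = G.dist u v ∧
      (p.numEdgesOutside H₀ < z ∨ ∃ w ∈ R₂, ∃ x ∈ p.support, G.Adj w x))
    (htree : ∀ w ∈ R₂, ∀ t, H.edist w t ≤ G.edist w t) (u v : V) :
    H.edist u v ≤ G.edist u v + 4 := by
  by_cases huv : G.Reachable u v
  swap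
  · simp [edist_eq_top_of_not_reachable huv]
  obtain ⟨p, hp, hroute⟩ := hgeo u v huv
  rw [← huv.coe_dist_eq_edist, ← hp]
  rcases hroute with hfew | ⟨w, hw, x, hx, hwx⟩
  · exact edist_le_length_add_four hH₀ hcl hsc p hfew.le
  · exact (edist_le_length_add_two (htree w hw) hwx p hx).trans (by gcongr; norm_num)

section

variable [Fintype V] [DecidableEq V] [DecidableRel G.Adj]

theorem exists_clustering {d : ℕ} (hd : 0 < d) :
    ∃ (H₀ : SimpleGraph V) (R : Finset V), H₀ ≤ G ∧
      H₀.edgeSet.ncard ≤ Fintype.card V * d + Fintype.card V ∧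
      (#R : ℝ) ≤ Fintype.card V / d * (1 + Real.log (Fintype.card V)) ∧
      ∀ x y, G.Adj x y → ¬H₀.Adj x y → d ≤ G.degree x ∧ ∃ c ∈ R, H₀.Adj c x := by
  set heavy := univ.filter fun x => d ≤ G.degree x
  obtain ⟨R, hR, hRcard⟩ := exists_hitting_set (fun x => G.neighborFinset x)
    (by positivity : (0 : ℝ) < d) heavy fun x hx => by simpa using (mem_filter.mp hx).2
  choose! center hcenter using hR
  set E₀ := (univ.filter fun x => G.degree x < d).biUnion (fun x => G.incidenceFinset x) ∪
    heavy.image fun x => s(x, center x)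
  have hE₀ : ↑E₀ ⊆ G.edgeSet := by
    intro e he
    simp only [E₀, coe_union, coe_biUnion, coe_image, Set.mem_union, Set.mem_iUnion,
      Set.mem_image, mem_coe, mem_incidenceFinset] at he
    obtain ⟨x, -, hx⟩ | ⟨x, hx, rfl⟩ := he
    · exact hx.1
    · simpa using (hcenter x hx).2
  refine ⟨fromEdgeSet ↑E₀, R, (fromEdgeSet_le G).mpr (Set.sdiff_subset.trans hE₀), ?_, ?_, ?_⟩
  · refine (ncard_edgeSet_fromEdgeSet_le E₀).trans <| (card_union_le _ _).trans <|
      add_le_add ?_ (card_image_le.trans (card_le_univ _))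
    calc _ ≤ ∑ x ∈ univ.filter fun x => G.degree x < d, #(G.incidenceFinset x) := card_biUnion_le
      _ ≤ ∑ x ∈ univ.filter fun x => G.degree x < d, d := sum_le_sum fun x hx => by
          rw [card_incidenceFinset_eq_degree]; exact (mem_filter.mp hx).2.le
      _ ≤ Fintype.card V * d := by
          rw [sum_const, smul_eq_mul]; exact Nat.mul_le_mul_right _ (card_le_univ _)
  · refine hRcard.trans ?_
    gcongr _ * (1 + ?_)
    exact Real.log_natCast_le_log_natCast (card_le_univ heavy)
  · intro x y hxy hxy₀
    rw [fromEdgeSet_adj, not_and_or, not_ne_iff] at hxy₀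
    have hxyE₀ : s(x, y) ∉ E₀ := fun h => hxy₀.elim (· h) hxy.ne
    have hx : d ≤ G.degree x := not_lt.mp fun hlt => hxyE₀ <| mem_union_left _ <|
      mem_biUnion.mpr ⟨x, by simpa using hlt, (mem_incidenceFinset _ _ _).mpr ⟨hxy, by simp⟩⟩
    have hxh : x ∈ heavy := by simpa [heavy] using hx
    refine ⟨hx, center x, (hcenter x hxh).1, (fromEdgeSet_adj _).mpr ⟨?_, ?_⟩⟩
    · exact Sym2.eq_swap ▸ mem_union_right _ (mem_image_of_mem _ hxh)
    · exact ((mem_neighborFinset _ _ _).mp (hcenter x hxh).2).ne.symm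

theorem exists_hitting_geodesics (H₀ : SimpleGraph V) {d z : ℕ} (hd : 0 < d) (hz : 0 < z)
    (hheavy : ∀ x y, G.Adj x y → ¬H₀.Adj x y → d ≤ G.degree x) :
    ∃ R : Finset V,
      (#R : ℝ) ≤ 3 * Fintype.card V / (z * d) * (1 + 2 * Real.log (Fintype.card V)) ∧
      ∀ u v, G.Reachable u v → ∃ p : G.Walk u v, p.length = G.dist u v ∧
        (p.numEdgesOutside H₀ < z ∨ ∃ w ∈ R, ∃ x ∈ p.support, G.Adj w x) := by
  classical
  choose geo hgeo using fun uv : {uv : V × V // G.Reachable uv.1 uv.2} =>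
    uv.2.exists_walk_length_eq_dist
  set heavyOn := fun i => (geo i).support.toFinset.filter (d ≤ G.degree ·)
  set I := univ.filter fun i => z ≤ (geo i).numEdgesOutside H₀
  obtain ⟨R, hR, hRcard⟩ := exists_hitting_set
    (fun i => (heavyOn i).biUnion fun x => G.neighborFinset x)
    (by positivity : (0 : ℝ) < z * d / 3) I fun i hi => by
      have hz := ((mem_filter.mp hi).2.trans
        (((geo i).isPath_of_length_eq_dist (hgeo i)).numEdgesOutside_le hheavy))
      have := (geo i).card_mul_le_card_biUnion_neighborFinset (hgeo i) (filter_subset _ _)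
        (T := heavyOn i) (d := d) (fun x hx => (mem_filter.mp hx).2)
      rw [div_le_iff₀ (by norm_num)]
      exact_mod_cast (Nat.mul_le_mul_right d hz).trans this
  refine ⟨R, hRcard.trans ?_, fun u v huv => ⟨geo ⟨(u, v), huv⟩, hgeo _, ?_⟩⟩
  · have hI : #I ≤ Fintype.card V ^ 2 := (card_le_univ I).trans <|
      (Fintype.card_subtype_le _).trans_eq (by rw [Fintype.card_prod, sq])
    rw [div_div_eq_mul_div, mul_comm _ (3 : ℝ)]
    gcongr _ * (1 + ?_)
    simpa [Real.log_pow] using Real.log_natCast_le_log_natCast hI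
  · by_cases hbad : z ≤ (geo ⟨(u, v), huv⟩).numEdgesOutside H₀
    · obtain ⟨w, hwR, hw⟩ := hR _ (mem_filter.mpr ⟨mem_univ _, hbad⟩)
      obtain ⟨x, hx, hwx⟩ := mem_biUnion.mp hw
      exact Or.inr ⟨w, hwR, x, by simpa using (mem_filter.mp hx).1,
        ((mem_neighborFinset _ _ _).mp hwx).symm⟩
    · exact Or.inl (not_le.mp hbad)

end

theorem exists_isAdditiveSpanner_four [Fintype V] (G : SimpleGraph V) {d z : ℕ} (hd : 0 < d)
    (hz : 0 < z) :
    ∃ H : SimpleGraph V, IsAdditiveSpanner G H 4 ∧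
      (H.edgeSet.ncard : ℝ) ≤ Fintype.card V * d + Fintype.card V +
        z * (Fintype.card V / d * (1 + Real.log (Fintype.card V))) ^ 2 +
        Fintype.card V * (3 * Fintype.card V / (z * d) * (1 + 2 * Real.log (Fintype.card V))) := by
  classical
  obtain ⟨H₀, R₁, hH₀G, hH₀card, hR₁card, hcl⟩ := G.exists_clustering hd
  choose B hBcard hBG hB using fun c₁ c₂ =>
    G.exists_shortcut H₀ (H₀.neighborSet c₁) (H₀.neighborSet c₂) z
  obtain ⟨R₂, hR₂card, hgeo⟩ := G.exists_hitting_geodesics H₀ hd hz fun x y h h' => (hcl x y h h').1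
  choose T hTG hTcard hT using G.exists_shortestPathTree
  set E := (R₁ ×ˢ R₁).biUnion (fun c => B c.1 c.2) ∪ R₂.biUnion T
  refine ⟨H₀ ⊔ fromEdgeSet ↑E, ⟨sup_le hH₀G ((fromEdgeSet_le G).mpr ?_), ?_⟩, ?_⟩
  · refine Set.sdiff_subset.trans fun e he => ?_
    simp only [E, coe_union, coe_biUnion, Set.mem_union, Set.mem_iUnion, mem_coe] at he
    obtain ⟨c, -, he⟩ | ⟨w, -, he⟩ := he
    · exact hBG _ _ he
    · exact hTG w he
  · refine edist_le_edist_add_four (R₁ := ↑R₁) le_sup_left (fun x y h h' => (hcl x y h h').2)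
      (fun c₁ hc₁ c₂ hc₂ a ha b hb q hq => ?_) hgeo fun w hw t => ?_
    · obtain ⟨a', ha', b', hb', hab'⟩ := hB c₁ c₂ a ha b hb q hq
      refine ⟨a', ha', b', hb', (edist_anti (sup_le_sup_left (fromEdgeSet_mono ?_) _)).trans hab'⟩
      exact coe_subset.mpr (subset_union_left.trans'
        (subset_biUnion_of_mem (fun c => B c.1 c.2) (x := (c₁, c₂)) (mem_product.mpr ⟨hc₁, hc₂⟩)))
    · refine (edist_anti (le_sup_right.trans' (fromEdgeSet_mono ?_))).trans (hT w t)
      exact coe_subset.mpr (subset_union_right.trans' (subset_biUnion_of_mem T hw))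
  · have hcard : (H₀ ⊔ fromEdgeSet ↑E).edgeSet.ncard ≤ Fintype.card V * d + Fintype.card V +
        z * #R₁ ^ 2 + Fintype.card V * #R₂ := by
      rw [edgeSet_sup, add_assoc _ (z * _)]
      refine (Set.ncard_union_le _ _).trans (add_le_add hH₀card
        ((ncard_edgeSet_fromEdgeSet_le E).trans ((card_union_le _ _).trans (add_le_add ?_ ?_))))
      · calc _ ≤ ∑ c ∈ R₁ ×ˢ R₁, #(B c.1 c.2) := card_biUnion_le
          _ ≤ ∑ c ∈ R₁ ×ˢ R₁, z := sum_le_sum fun c _ => hBcard _ _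
          _ = z * #R₁ ^ 2 := by rw [sum_const, card_product, smul_eq_mul, sq, mul_comm]
      · calc _ ≤ ∑ w ∈ R₂, #(T w) := card_biUnion_le
          _ ≤ ∑ w ∈ R₂, Fintype.card V := sum_le_sum fun w _ => hTcard w
          _ = Fintype.card V * #R₂ := by rw [sum_const, smul_eq_mul, mul_comm]
    calc _ ≤ (Fintype.card V * d + Fintype.card V + z * #R₁ ^ 2 + Fintype.card V * #R₂ : ℝ) := by
          exact_mod_cast hcard
      _ ≤ _ := by gcongr

end SimpleGraph

theorem spanner_edge_bound_le {n L t d z : ℝ} (hL : 1 / 2 ≤ L) (ht : 1 ≤ t) (hn : n = L * t ^ 5)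
    (hd : L * t ^ 2 ≤ d) (hd' : d ≤ L * t ^ 2 + 1) (hz : t ≤ z) (hz' : z ≤ t + 1) :
    n * d + n + z * (n / d * (1 + L)) ^ 2 + n * (3 * n / (z * d) * (1 + 2 * L)) ≤
      35 * (L ^ 2 * t ^ 7) := by
  subst hn
  have hL₀ : 0 < L := by linarith
  have ht₀ : 0 < t := by linarith
  have hd₀ : 0 < d := lt_of_lt_of_le (by positivity) hd
  have hz₀ : 0 < z := by linarith
  have hLt : 1 ≤ 2 * L * t ^ 2 := by nlinarith [one_le_pow₀ (n := 2) ht]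
  have h₁ : L * t ^ 5 ≤ 2 * (L ^ 2 * t ^ 7) := by
    have : L * t ^ 5 * 1 ≤ L * t ^ 5 * (2 * L * t ^ 2) := by gcongr
    linarith
  have h₂ : L * t ^ 5 * d ≤ 3 * (L ^ 2 * t ^ 7) := by
    have : L * t ^ 5 * d ≤ L * t ^ 5 * (L * t ^ 2 + 1) := by gcongr
    linarith
  have h₃ : z * (L * t ^ 5 / d * (1 + L)) ^ 2 ≤ 18 * (L ^ 2 * t ^ 7) := by
    have hq : L * t ^ 5 / d ≤ t ^ 3 := by
      rw [div_le_iff₀ hd₀]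
      nlinarith [pow_pos ht₀ 3]
    calc z * (L * t ^ 5 / d * (1 + L)) ^ 2 ≤ (2 * t) * (t ^ 3 * (3 * L)) ^ 2 := by
          gcongr
          · linarith
          · linarith
      _ = 18 * (L ^ 2 * t ^ 7) := by ring
  have h₄ : L * t ^ 5 * (3 * (L * t ^ 5) / (z * d) * (1 + 2 * L)) ≤ 12 * (L ^ 2 * t ^ 7) := by
    have hq : 3 * (L * t ^ 5) / (z * d) ≤ 3 * t ^ 2 := by
      rw [div_le_iff₀ (by positivity)]
      have : t * (L * t ^ 2) ≤ z * d := by gcongr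
      nlinarith [pow_pos ht₀ 2]
    calc L * t ^ 5 * (3 * (L * t ^ 5) / (z * d) * (1 + 2 * L))
        ≤ L * t ^ 5 * (3 * t ^ 2 * (4 * L)) := by
          gcongr
          linarith
      _ = 12 * (L ^ 2 * t ^ 7) := by ring
  linarith

theorem mul_pow_five_rpow_mul_rpow {L t : ℝ} (hL : 0 < L) (ht : 0 ≤ t) :
    (L * t ^ 5) ^ (7 / 5 : ℝ) * L ^ (3 / 5 : ℝ) = L ^ 2 * t ^ 7 := by
  calc (L * t ^ 5) ^ (7 / 5 : ℝ) * L ^ (3 / 5 : ℝ)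
      = (L ^ (7 / 5 : ℝ) * L ^ (3 / 5 : ℝ)) * (t ^ 5) ^ (7 / 5 : ℝ) := by
        rw [Real.mul_rpow hL.le (by positivity)]; ring
    _ = L ^ ((2 : ℕ) : ℝ) * t ^ ((7 : ℕ) : ℝ) := by
        rw [← Real.rpow_add hL, ← Real.rpow_natCast t 5, ← Real.rpow_mul ht]
        norm_num
    _ = L ^ 2 * t ^ 7 := by rw [Real.rpow_natCast, Real.rpow_natCast]

theorem four_additive_spanner_exists :
    ∃ C : ℝ, 0 < C ∧
      ∀ (V : Type) [Fintype V] (G : SimpleGraph V),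
        2 ≤ Fintype.card V →
        ∃ H : SimpleGraph V, IsAdditiveSpanner G H 4 ∧
          (H.edgeSet.ncard : ℝ) ≤
            C * (Fintype.card V : ℝ) ^ (7 / 5 : ℝ) *
              (Real.log (Fintype.card V)) ^ (3 / 5 : ℝ) := by
  refine ⟨35, by norm_num, fun V _ G hV => ?_⟩
  have hn : (2 : ℝ) ≤ Fintype.card V := by exact_mod_cast hV
  set n : ℝ := (Fintype.card V : ℝ)
  set L := Real.log n
  have hL : 1 / 2 ≤ L := by
    linarith [Real.log_two_gt_d9, Real.log_le_log (by norm_num) hn]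
  have hLn : L < n := by linarith [Real.log_le_sub_one_of_pos (by positivity : 0 < n)]
  set t := (n / L) ^ (1 / 5 : ℝ)
  have ht₅ : t ^ 5 = n / L := by
    rw [← Real.rpow_natCast, ← Real.rpow_mul (by positivity)]
    norm_num
  have ht : 1 ≤ t := Real.one_le_rpow ((one_le_div (by positivity)).mpr hLn.le) (by norm_num)
  have hnLt : n = L * t ^ 5 := by rw [ht₅]; field_simp
  have hC : n ^ (7 / 5 : ℝ) * L ^ (3 / 5 : ℝ) = L ^ 2 * t ^ 7 := by
    rw [hnLt]
    exact mul_pow_five_rpow_mul_rpow (by linarith) (by positivity)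
  obtain ⟨H, hH, hcard⟩ := G.exists_isAdditiveSpanner_four (d := ⌈L * t ^ 2⌉₊) (z := ⌈t⌉₊)
    (Nat.ceil_pos.mpr (by positivity)) (Nat.ceil_pos.mpr (by positivity))
  refine ⟨H, hH, hcard.trans ?_⟩
  rw [mul_assoc, hC]
  exact spanner_edge_bound_le hL ht hnLt (Nat.le_ceil _) (Nat.ceil_lt_add_one (by positivity)).le
    (Nat.le_ceil _) (Nat.ceil_lt_add_one (by positivity)).le
end

section
/- Let G = (V, E) be an unweighted undirected simple graph, let k ≥ 0, and let G₀ be the bipartite double cover of G. Suppose H₀ is a (2k+1)-additive spanner of G₀. Define H to be the spanning subgraph of G whose edge set consists of all edges {u, v} ∈ E such that H₀ contains the edge {(u,0),(v,1)} or the edge {(u,1),(v,0)}. Then H is a (2k)-additive spanner of G. -/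
/-! Lift a shortest `u`–`v` walk of `G` to the double cover, starting at `(u, false)`; its
endpoint `(v, c)` satisfies `c = true` exactly when `dist_G(u, v)` is odd. The spanner `H₀` then
has a `(u, false)`–`(v, c)` walk of length at most `dist_G(u, v) + 2k + 1`, and since the double
cover is bipartite with sides `V × {false}` and `V × {true}`, its length has the parity of
`dist_G(u, v)`, so the bound improves to `dist_G(u, v) + 2k`. Forgetting the second coordinate
maps `H₀` onto the projected subgraph. -/

/-- The bipartite double cover of `G`: vertices `V × Bool`, with `(u, i)`
adjacent to `(v, j)` iff `u ~ v` in `G` and `i ≠ j`. -/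
def doubleCover {V : Type*} (G : SimpleGraph V) : SimpleGraph (V × Bool) where
  Adj p q := G.Adj p.1 q.1 ∧ p.2 ≠ q.2
  symm := by
    constructor
    rintro p q ⟨h, hne⟩
    exact ⟨h.symm, hne.symm⟩
  loopless := by
    constructor
    rintro p ⟨-, hne⟩
    exact hne rfl

/-- The projection of a spanning subgraph `H₀` of the double cover of `G`
back to `G`: an edge `{u, v}` of `G` is kept iff `H₀` contains the edge
`{(u, 0), (v, 1)}` or the edge `{(u, 1), (v, 0)}`. -/
def projectedSubgraph {V : Type*} (G : SimpleGraph V)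
    (H₀ : SimpleGraph (V × Bool)) : SimpleGraph V where
  Adj u v := G.Adj u v ∧
    (H₀.Adj (u, false) (v, true) ∨ H₀.Adj (u, true) (v, false))
  symm := by
    constructor
    rintro u v ⟨h, h' | h'⟩
    · exact ⟨h.symm, Or.inr h'.symm⟩
    · exact ⟨h.symm, Or.inl h'.symm⟩
  loopless := by
    constructor
    rintro u ⟨h, -⟩
    exact G.loopless.irrefl u h

namespace SimpleGraph

variable {α β : Type*}

theorem Hom.edist_le {G : SimpleGraph α} {G' : SimpleGraph β} (f : G →g G') (a b : α) :
    G'.edist (f a) (f b) ≤ G.edist a b := by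
  rcases eq_or_ne (G.edist a b) ⊤ with h | h
  · simp [h]
  obtain ⟨p, hp⟩ := exists_walk_of_edist_ne_top h
  calc G'.edist (f a) (f b) ≤ (p.map f).length := (p.map f).edist_le
    _ = G.edist a b := by rw [Walk.length_map, hp]

theorem Coloring.edist_le_of_le_add_one {K : SimpleGraph α} (c : K.Coloring Bool) {a b : α}
    {n : ℕ} (h : K.edist a b ≤ n + 1) (hn : Even n ↔ (c a ↔ c b)) : K.edist a b ≤ n := by
  obtain ⟨p, hp⟩ := exists_walk_of_edist_ne_top (ne_top_of_le_ne_top (by simp) h)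
  have hlen : p.length ≤ n + 1 := by exact_mod_cast hp ▸ h
  have hparity : Even p.length ↔ Even n := (c.even_length_iff_congr p).trans hn.symm
  rw [Nat.even_iff, Nat.even_iff] at hparity
  rw [← hp]
  exact_mod_cast (by omega : p.length ≤ n)

end SimpleGraph

open SimpleGraph

section DoubleCover

variable {V : Type*} {G : SimpleGraph V} {H₀ : SimpleGraph (V × Bool)}

def doubleCoverColoring (hle : H₀ ≤ doubleCover G) : H₀.Coloring Bool :=
  Coloring.mk Prod.snd fun h => (hle h).2

@[simp]
theorem doubleCoverColoring_apply (hle : H₀ ≤ doubleCover G) (p : V × Bool) :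
    doubleCoverColoring hle p = p.2 :=
  rfl

theorem exists_doubleCover_walk_length_eq {u v : V} (w : G.Walk u v) (b : Bool) :
    ∃ c, ∃ w' : (doubleCover G).Walk (u, b) (v, c), w'.length = w.length := by
  induction w generalizing b with
  | nil => exact ⟨b, .nil, rfl⟩
  | @cons x y _ h w ih =>
    obtain ⟨c, w', hw'⟩ := ih !b
    have hadj : (doubleCover G).Adj (x, b) (y, !b) := ⟨h, (Bool.not_ne_self b).symm⟩
    exact ⟨c, .cons hadj w', by rw [Walk.length_cons, hw', Walk.length_cons]⟩

theorem projectedSubgraph_le : projectedSubgraph G H₀ ≤ G := fun _ _ h => h.1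

def projectionHom (hle : H₀ ≤ doubleCover G) : H₀ →g projectedSubgraph G H₀ where
  toFun := Prod.fst
  map_rel' := by
    rintro ⟨x, i⟩ ⟨y, j⟩ h
    obtain ⟨hxy, hij⟩ := hle h
    refine ⟨hxy, ?_⟩
    cases i <;> cases j <;> simp_all

end DoubleCover

theorem projected_spanner_is_even_additive_spanner
    {V : Type*} (G : SimpleGraph V) (k : ℕ)
    (H₀ : SimpleGraph (V × Bool))
    (hle : H₀ ≤ doubleCover G)
    (hspan : ∀ a b : V × Bool,
      H₀.edist a b ≤ (doubleCover G).edist a b + (2 * k + 1)) :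
    projectedSubgraph G H₀ ≤ G ∧
      ∀ u v : V,
        (projectedSubgraph G H₀).edist u v ≤ G.edist u v + 2 * k := by
  refine ⟨projectedSubgraph_le, fun u v => ?_⟩
  rcases eq_or_ne (G.edist u v) ⊤ with htop | htop
  · simp [htop]
  obtain ⟨w, hw⟩ := exists_walk_of_edist_ne_top htop
  obtain ⟨c, w₀, hw₀⟩ := exists_doubleCover_walk_length_eq w false
  have hH₀ : H₀.edist (u, false) (v, c) ≤ (w.length + 2 * k : ℕ) + 1 := by
    calc H₀.edist (u, false) (v, c) ≤ w₀.length + (2 * k + 1) :=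
          (hspan _ _).trans (by gcongr; exact w₀.edist_le)
      _ = (w.length + 2 * k : ℕ) + 1 := by rw [hw₀]; push_cast; ring
  have hparity : Even (w.length + 2 * k) ↔ c = false := by
    simpa [Nat.even_add, hw₀] using (doubleCoverColoring le_rfl).even_length_iff_congr w₀
  calc (projectedSubgraph G H₀).edist u v ≤ H₀.edist (u, false) (v, c) :=
        (projectionHom hle).edist_le (u, false) (v, c)
    _ ≤ (w.length + 2 * k : ℕ) :=
        (doubleCoverColoring hle).edist_le_of_le_add_one hH₀ (by simpa using hparity)
    _ = G.edist u v + 2 * k := by rw [← hw]; push_cast; rfl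
end

section
/- Let k ≥ 0 and let f : ℕ → ℕ. Suppose that every unweighted undirected simple graph on N vertices admits a (2k+1)-additive spanner with at most f(N) edges. Then every unweighted undirected simple graph on n vertices admits a (2k)-additive spanner with at most f(2n) edges. -/
/-- `G.bipartiteDouble` is the bipartite double cover of `G` with a loop added at every vertex. -/
def SimpleGraph.bipartiteDouble {V : Type*} (G : SimpleGraph V) : SimpleGraph (V × Bool) where
  Adj x y := x.2 ≠ y.2 ∧ (x.1 = y.1 ∨ G.Adj x.1 y.1)
  symm := ⟨fun _ _ ⟨hne, hadj⟩ => ⟨hne.symm, hadj.imp Eq.symm Adj.symm⟩⟩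
  loopless := ⟨fun _ ⟨hne, _⟩ => hne rfl⟩

namespace SimpleGraph

variable {V W : Type*} {G : SimpleGraph V}

@[simp]
theorem bipartiteDouble_adj {x y : V × Bool} :
    G.bipartiteDouble.Adj x y ↔ x.2 ≠ y.2 ∧ (x.1 = y.1 ∨ G.Adj x.1 y.1) :=
  Iff.rfl

theorem Walk.even_length_iff_of_le_bipartiteDouble {H : SimpleGraph (V × Bool)}
    (hle : H ≤ G.bipartiteDouble) {x y : V × Bool} (p : H.Walk x y) :
    Even p.length ↔ x.2 = y.2 := by
  induction p with
  | nil => simp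
  | @cons a b c hab p ih =>
    have hne : a.2 ≠ b.2 := (bipartiteDouble_adj.mp (hle hab)).1
    rw [length_cons, Nat.even_add_one, ih]
    revert hne
    cases a.2 <;> cases b.2 <;> cases c.2 <;> simp

theorem Walk.exists_bipartiteDouble_lift {u v : V} (p : G.Walk u v) (i : Bool) :
    ∃ (j : Bool) (q : G.bipartiteDouble.Walk (u, i) (v, j)), q.length = p.length := by
  induction p generalizing i with
  | nil => exact ⟨i, nil, rfl⟩
  | @cons a b c hab p ih =>
    obtain ⟨j, q, hq⟩ := ih (!i)
    exact ⟨j, cons (show G.bipartiteDouble.Adj (a, i) (b, !i) by simp [hab]) q,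
      by simp [hq]⟩

theorem map_fst_le_of_le_bipartiteDouble {H : SimpleGraph (V × Bool)}
    (hle : H ≤ G.bipartiteDouble) : H.map Prod.fst ≤ G := by
  rintro _ _ ⟨hne, x, y, hxy, rfl, rfl⟩
  exact (bipartiteDouble_adj.mp (hle hxy)).2.resolve_left hne

theorem Walk.edist_map_le_length (f : V → W) {H : SimpleGraph V} {x y : V} (p : H.Walk x y) :
    (H.map f).edist (f x) (f y) ≤ p.length := by
  induction p with
  | nil => simp
  | @cons a b c hab p ih =>
    rw [length_cons, Nat.cast_succ]
    by_cases hf : f a = f b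
    · rw [hf]
      exact ih.trans le_self_add
    · calc (H.map f).edist (f a) (f c)
            ≤ (H.map f).edist (f a) (f b) + (H.map f).edist (f b) (f c) :=
              SimpleGraph.edist_triangle
        _ ≤ 1 + p.length := by
            rw [edist_eq_one_iff_adj.mpr (map_adj_apply' hab hf)]
            exact add_le_add_right ih 1
        _ = p.length + 1 := add_comm _ _

theorem edgeSet_map_subset (f : V → W) (H : SimpleGraph V) :
    (H.map f).edgeSet ⊆ Sym2.map f '' H.edgeSet := by
  intro e he
  induction e using Sym2.ind with
  | _ a b =>
    obtain ⟨-, x, y, hxy, rfl, rfl⟩ := he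
    exact ⟨s(x, y), hxy, rfl⟩

theorem ncard_edgeSet_map_le [Finite V] (f : V → W) (H : SimpleGraph V) :
    (H.map f).edgeSet.ncard ≤ H.edgeSet.ncard :=
  (Set.ncard_le_ncard (edgeSet_map_subset f H) (H.edgeSet.toFinite.image _)).trans
    (Set.ncard_image_le H.edgeSet.toFinite)

end SimpleGraph

open SimpleGraph in
theorem IsAdditiveSpanner.map_fst_of_bipartiteDouble {V : Type*} {G : SimpleGraph V}
    {H : SimpleGraph (V × Bool)} {k : ℕ}
    (h : IsAdditiveSpanner G.bipartiteDouble H (2 * k + 1)) :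
    IsAdditiveSpanner G (H.map Prod.fst) (2 * k) := by
  refine ⟨map_fst_le_of_le_bipartiteDouble h.1, fun u v => ?_⟩
  rcases eq_or_ne (G.edist u v) ⊤ with htop | htop
  · simp [htop]
  obtain ⟨p, hp⟩ := exists_walk_of_edist_ne_top htop
  obtain ⟨j, q, hq⟩ := p.exists_bipartiteDouble_lift false
  have hH : H.edist (u, false) (v, j) ≤ (p.length + (2 * k + 1) : ℕ) :=
    calc H.edist (u, false) (v, j) ≤ G.bipartiteDouble.edist (u, false) (v, j) + (2 * k + 1) :=
          h.2 _ _
      _ ≤ q.length + (2 * k + 1) := by gcongr; exact edist_le q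
      _ = (p.length + (2 * k + 1) : ℕ) := by rw [hq]; push_cast; rfl
  obtain ⟨r, hr⟩ := exists_walk_of_edist_ne_top (ne_top_of_le_ne_top (ENat.natCast_ne_top _) hH)
  have hlen : r.length ≤ p.length + (2 * k + 1) := by exact_mod_cast hr ▸ hH
  have hpar : Even r.length ↔ Even p.length := by
    rw [r.even_length_iff_of_le_bipartiteDouble h.1, ← hq,
      q.even_length_iff_of_le_bipartiteDouble le_rfl]
  have hlen' : r.length ≤ p.length + 2 * k := by
    simp only [Nat.even_iff] at hpar
    omega
  calc (H.map Prod.fst).edist u v ≤ r.length := r.edist_map_le_length Prod.fst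
    _ ≤ (p.length + 2 * k : ℕ) := by exact_mod_cast hlen'
    _ = G.edist u v + (2 * k : ℕ) := by rw [← hp]; push_cast; rfl

theorem even_spanner_from_odd_spanner (k : ℕ) (f : ℕ → ℕ)
    (hodd : ∀ (W : Type) [Fintype W] (G : SimpleGraph W),
      ∃ H : SimpleGraph W, IsAdditiveSpanner G H (2 * k + 1) ∧
        H.edgeSet.ncard ≤ f (Fintype.card W)) :
    ∀ (V : Type) [Fintype V] (G : SimpleGraph V),
      ∃ H : SimpleGraph V, IsAdditiveSpanner G H (2 * k) ∧
        H.edgeSet.ncard ≤ f (2 * Fintype.card V) := by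
  intro V _ G
  obtain ⟨H, hH, hcard⟩ := hodd (V × Bool) G.bipartiteDouble
  refine ⟨H.map Prod.fst, hH.map_fst_of_bipartiteDouble, ?_⟩
  calc (H.map Prod.fst).edgeSet.ncard ≤ H.edgeSet.ncard :=
        SimpleGraph.ncard_edgeSet_map_le Prod.fst H
    _ ≤ f (Fintype.card (V × Bool)) := hcard
    _ = f (2 * Fintype.card V) := by rw [Fintype.card_prod, Fintype.card_bool, mul_comm]
end

section
/- Let G be an unweighted undirected simple graph and H a spanning subgraph of G. Suppose y is a vertex such that dist_H(y, w) = dist_G(y, w) for every vertex w (i.e., H contains a shortest-path tree of G rooted at y). Let u, v be vertices and let x be a vertex lying on some shortest u–v path in G (so dist_G(u,x) + dist_G(x,v) = dist_G(u,v)) with dist_G(x, y) ≤ 1. Then dist_H(u, v) ≤ dist_G(u, v) + 2. -/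
theorem spanner_via_bfs_tree_near_shortest_path {V : Type*}
    (G H : SimpleGraph V) (hle : H ≤ G) (y u v x : V)
    (hbfs : ∀ w : V, H.edist y w = G.edist y w)
    (hx : G.edist u x + G.edist x v = G.edist u v)
    (hxy : G.edist x y ≤ 1) :
    H.edist u v ≤ G.edist u v + 2 := by
  calc H.edist u v ≤ H.edist u y + H.edist y v := SimpleGraph.edist_triangle
    _ = G.edist u y + G.edist y v := by
        rw [SimpleGraph.edist_comm, hbfs, hbfs, SimpleGraph.edist_comm]
    _ ≤ (G.edist u x + G.edist x y) + (G.edist y x + G.edist x v) := by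
        gcongr <;> exact SimpleGraph.edist_triangle
    _ ≤ (G.edist u x + 1) + (1 + G.edist x v) := by
        rw [SimpleGraph.edist_comm (u := y) (v := x)]; gcongr
    _ = (G.edist u x + G.edist x v) + 2 := by ring
    _ = G.edist u v + 2 := by rw [hx]
end

section
/- Let B = (L, R, C) be a bipartite graph with parts L and R and edge set C, where |L| = n ≥ 2 and 1 ≤ |R| ≤ n². Suppose every vertex of R has at least k ≥ 1 neighbors in L. Then there exists a set S ⊆ L with |S| ≤ (2n/k) · log₂(n²) = (4n/k) · log₂ n such that every vertex of R has a neighbor in S. -/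
theorem greedy_dominating_set_bipartite {L R : Type} [Fintype L] [Fintype R]
    [DecidableEq L] (Adj : L → R → Prop) [∀ l r, Decidable (Adj l r)]
    (k : ℕ) (hk : 1 ≤ k)
    (hL : 2 ≤ Fintype.card L)
    (hR₁ : 1 ≤ Fintype.card R)
    (hR₂ : Fintype.card R ≤ Fintype.card L ^ 2)
    (hdeg : ∀ r : R, k ≤ (Finset.univ.filter fun l : L => Adj l r).card) :
    ∃ S : Finset L,
      (S.card : ℝ) ≤ (4 * (Fintype.card L : ℝ) / k) *
        Real.logb 2 (Fintype.card L) ∧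
      ∀ r : R, ∃ l ∈ S, Adj l r := by
  classical
  set n := Fintype.card L with hn
  have hnL : Nonempty L := Fintype.card_pos_iff.mp (by omega)
  have hnR : Nonempty R := Fintype.card_pos_iff.mp (by omega)
  have hkn : k ≤ n := by
    obtain ⟨r⟩ := hnR
    exact (hdeg r).trans ((Finset.card_filter_le _ _).trans (by simp [hn]))
  -- pigeonhole: some vertex of L covers at least a k/n fraction of T
  have key : ∀ T : Finset R, ∃ l : L,
      k * T.card ≤ n * (T.filter fun r => Adj l r).card := by
    intro T
    have hsum : k * T.card ≤ ∑ l : L, (T.filter fun r => Adj l r).card := by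
      have hcomm : ∑ l : L, (T.filter fun r => Adj l r).card
          = ∑ r ∈ T, (Finset.univ.filter fun l : L => Adj l r).card := by
        simp only [Finset.card_filter]
        rw [Finset.sum_comm]
      rw [hcomm]
      calc k * T.card = ∑ _r ∈ T, k := by rw [Finset.sum_const, smul_eq_mul, mul_comm]
        _ ≤ _ := Finset.sum_le_sum fun r _ => hdeg r
    obtain ⟨l, -, hmax⟩ := Finset.exists_max_image Finset.univ
      (fun l : L => (T.filter fun r => Adj l r).card) Finset.univ_nonempty
    refine ⟨l, hsum.trans ?_⟩
    calc ∑ l' : L, (T.filter fun r => Adj l' r).card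
        ≤ Finset.univ.card • (T.filter fun r => Adj l r).card :=
          Finset.sum_le_card_nsmul _ _ _ fun l' _ => hmax l' (Finset.mem_univ l')
      _ = n * (T.filter fun r => Adj l r).card := by simp [hn]
  -- greedy iteration
  have greedy : ∀ t : ℕ, ∀ T : Finset R, ∃ S : Finset L, S.card ≤ t ∧
      (T.filter fun r => ∀ l ∈ S, ¬ Adj l r).card * n ^ t ≤ T.card * (n - k) ^ t := by
    intro t
    induction t with
    | zero =>
      intro T
      refine ⟨∅, le_refl 0, ?_⟩
      simp [Finset.filter_true_of_mem]
    | succ t ih =>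
      intro T
      obtain ⟨l, hl⟩ := key T
      obtain ⟨S', hS'c, hS'⟩ := ih (T.filter fun r => ¬ Adj l r)
      refine ⟨insert l S', (Finset.card_insert_le _ _).trans (by omega), ?_⟩
      have hsub : (T.filter fun r => ∀ l' ∈ insert l S', ¬ Adj l' r)
          ⊆ ((T.filter fun r => ¬ Adj l r).filter fun r => ∀ l' ∈ S', ¬ Adj l' r) := by
        intro r hr
        simp only [Finset.mem_filter, Finset.mem_insert] at hr ⊢
        refine ⟨⟨hr.1, hr.2 l (Or.inl rfl)⟩, fun l' hl' => hr.2 l' (Or.inr hl')⟩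
      have h1 := Finset.card_le_card hsub
      have h3 := Finset.card_filter_add_card_filter_not (s := T)
        (p := fun r => Adj l r)
      have hcovle : (T.filter fun r => Adj l r).card ≤ T.card := Finset.card_filter_le _ _
      have h2 : (T.filter fun r => ¬ Adj l r).card * n ≤ T.card * (n - k) := by
        have heq : (T.filter fun r => ¬ Adj l r).card
            = T.card - (T.filter fun r => Adj l r).card := by omega
        rw [heq]
        zify [hkn, hcovle]
        nlinarith [hl]
      calc (T.filter fun r => ∀ l' ∈ insert l S', ¬ Adj l' r).card * n ^ (t + 1)
          = ((T.filter fun r => ∀ l' ∈ insert l S', ¬ Adj l' r).card * n ^ t) * n := by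
            ring
        _ ≤ (((T.filter fun r => ¬ Adj l r).filter fun r => ∀ l' ∈ S', ¬ Adj l' r).card
              * n ^ t) * n := by
            exact Nat.mul_le_mul_right _ (Nat.mul_le_mul_right _ h1)
        _ ≤ ((T.filter fun r => ¬ Adj l r).card * (n - k) ^ t) * n := by
            exact Nat.mul_le_mul_right _ hS'
        _ = ((T.filter fun r => ¬ Adj l r).card * n) * (n - k) ^ t := by ring
        _ ≤ (T.card * (n - k)) * (n - k) ^ t := Nat.mul_le_mul_right _ h2
        _ = T.card * (n - k) ^ (t + 1) := by ring
  -- choose the number of steps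
  have hnpos : (0 : ℝ) < n := by positivity
  have hkpos : (0 : ℝ) < k := by positivity
  have hn2 : (2 : ℝ) ≤ n := by exact_mod_cast hL
  set v : ℝ := (2 * (n : ℝ) / k) * Real.log n with hv
  have hvnonneg : 0 ≤ v := by
    apply mul_nonneg
    · positivity
    · exact Real.log_nonneg (by linarith)
  set t : ℕ := ⌊v⌋₊ + 1 with htdef
  obtain ⟨S, hScard, hScov⟩ := greedy t Finset.univ
  -- the key strict inequality, done over the reals
  have hstrict : Fintype.card R * (n - k) ^ t < n ^ t := by
    have hcast : ((n - k : ℕ) : ℝ) = (n : ℝ) - k := Nat.cast_sub hkn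
    have hreal : (Fintype.card R : ℝ) * ((n : ℝ) - k) ^ t < (n : ℝ) ^ t := by
      rcases eq_or_lt_of_le hkn with hkeq | hklt
      · have : ((n : ℝ) - k) = 0 := by rw [hkeq]; ring
        rw [this, zero_pow (by omega : t ≠ 0)]
        have : (0:ℝ) < (n:ℝ) ^ t := by positivity
        simpa using this
      · have hknR : (k : ℝ) < n := by exact_mod_cast hklt
        have hnk0 : (0:ℝ) ≤ (n:ℝ) - k := by linarith
        have hexp1 : (n : ℝ) - k ≤ n * Real.exp (-(k / n)) := by
          have h := Real.add_one_le_exp (-(k / n : ℝ))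
          have : 1 - (k:ℝ)/n ≤ Real.exp (-(k/n)) := by linarith
          have h2 := mul_le_mul_of_nonneg_left this (le_of_lt hnpos)
          calc (n : ℝ) - k = n * (1 - (k:ℝ)/n) := by field_simp
            _ ≤ n * Real.exp (-(k/n)) := h2
        have hpow : ((n:ℝ) - k) ^ t ≤ ((n:ℝ) * Real.exp (-(k/n))) ^ t :=
          pow_le_pow_left₀ hnk0 hexp1 t
        have hexp2 : ((n:ℝ) * Real.exp (-(k/n))) ^ t
            = (n:ℝ) ^ t * Real.exp (-(k/n) * t) := by
          rw [mul_pow, ← Real.exp_nat_mul]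
          ring_nf
        have hlt : (n:ℝ)^2 * Real.exp (-(k/n) * t) < 1 := by
          have htv : v < t := by
            rw [htdef]; push_cast; exact Nat.lt_floor_add_one v
          have hfrac : (0:ℝ) < (k:ℝ)/n := by positivity
          have hkv : (k:ℝ) * v = 2 * n * Real.log n := by
            rw [hv]; field_simp
          have : 2 * Real.log n < (k/n : ℝ) * t := by
            rw [div_mul_eq_mul_div, lt_div_iff₀ hnpos]
            have hkvlt : (k:ℝ) * v < k * t := by
              exact mul_lt_mul_of_pos_left htv hkpos
            linarith
          have hexplt : Real.exp (-(k/n) * t) < Real.exp (-(2 * Real.log n)) := by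
            apply Real.exp_lt_exp.mpr; linarith
          have hexpeq : Real.exp (-(2 * Real.log n)) = ((n:ℝ)^2)⁻¹ := by
            rw [Real.exp_neg]
            congr 1
            have hlp : Real.log ((n:ℝ)^2) = 2 * Real.log n := by
              rw [Real.log_pow]; norm_num
            rw [← hlp, Real.exp_log (by positivity)]
          calc (n:ℝ)^2 * Real.exp (-(k/n) * t)
              < (n:ℝ)^2 * ((n:ℝ)^2)⁻¹ := by
                apply mul_lt_mul_of_pos_left _ (by positivity)
                rw [← hexpeq]; exact hexplt
            _ = 1 := by field_simp
        have hRn2 : (Fintype.card R : ℝ) ≤ (n:ℝ)^2 := by exact_mod_cast hR₂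
        calc (Fintype.card R : ℝ) * ((n : ℝ) - k) ^ t
            ≤ (n:ℝ)^2 * (((n:ℝ)) * Real.exp (-(k/n))) ^ t := by
              apply mul_le_mul hRn2 hpow (by positivity) (by positivity)
          _ = (n:ℝ)^t * ((n:ℝ)^2 * Real.exp (-(k/n) * t)) := by rw [hexp2]; ring
          _ < (n:ℝ)^t * 1 := by
              apply mul_lt_mul_of_pos_left hlt (by positivity)
          _ = (n:ℝ)^t := by ring
    have := hreal
    rw [← hcast] at this
    exact_mod_cast this
  refine ⟨S, ?_, ?_⟩
  · -- cardinality bound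
    have ht1 : (t : ℝ) ≤ v + 1 := by
      rw [htdef]; push_cast
      have := Nat.floor_le hvnonneg
      linarith
    have hScR : (S.card : ℝ) ≤ t := by exact_mod_cast hScard
    have hlog2pos : (0:ℝ) < Real.log 2 := Real.log_pos (by norm_num)
    have hlog2lt : Real.log 2 < 0.6931471808 := Real.log_two_lt_d9
    have hlog2gt : (0.6931471803 : ℝ) < Real.log 2 := Real.log_two_gt_d9
    have hlogn : Real.log 2 ≤ Real.log n := Real.log_le_log (by norm_num) hn2
    have ha : (1:ℝ) ≤ (n:ℝ)/k := by
      rw [le_div_iff₀ hkpos]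
      have : (k:ℝ) ≤ n := by exact_mod_cast hkn
      linarith
    have hgoal : v + 1 ≤ (4 * (n : ℝ) / k) * Real.logb 2 n := by
      rw [Real.logb, hv]
      rw [show (4 * (n:ℝ) / k) * (Real.log n / Real.log 2)
          = (4 * ((n:ℝ)/k) * Real.log n) / Real.log 2 by ring]
      rw [le_div_iff₀ hlog2pos]
      have hac : Real.log 2 ≤ ((n:ℝ)/k) * Real.log n := by
        nlinarith [Real.log_nonneg (by linarith : (1:ℝ) ≤ n)]
      have hv2 : 2 * (n:ℝ) / k * Real.log n = 2 * ((n:ℝ)/k) * Real.log n := by ring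
      rw [hv2]
      nlinarith [hac, hlog2lt, mul_nonneg (by linarith : (0:ℝ) ≤ (n:ℝ)/k)
        (Real.log_nonneg (by linarith : (1:ℝ) ≤ n))]
    calc (S.card : ℝ) ≤ t := hScR
      _ ≤ v + 1 := ht1
      _ ≤ _ := hgoal
  · -- coverage
    intro r
    by_contra hcon
    push_neg at hcon
    have hrmem : r ∈ Finset.univ.filter fun r => ∀ l ∈ S, ¬ Adj l r := by
      simp only [Finset.mem_filter, Finset.mem_univ, true_and]
      exact fun l hl => hcon l hl
    have hone : 1 ≤ (Finset.univ.filter fun r => ∀ l ∈ S, ¬ Adj l r).card :=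
      Finset.card_pos.mpr ⟨r, hrmem⟩
    have : n ^ t ≤ Fintype.card R * (n - k) ^ t := by
      calc n ^ t = 1 * n ^ t := by ring
        _ ≤ (Finset.univ.filter fun r => ∀ l ∈ S, ¬ Adj l r).card * n ^ t :=
            Nat.mul_le_mul_right _ hone
        _ ≤ Finset.univ.card * (n - k) ^ t := hScov
        _ = Fintype.card R * (n - k) ^ t := by rw [Finset.card_univ]
    omega
end
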